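/- Let (M, φ) be a 7-manifold with closed G₂-structure. The spaces 𝔛_Roc(M) of Rochesterian vector fields and 𝔛_{G₂}(M) of G₂-vector fields are closed under the Lie bracket of vector fields, giving inclusions of Lie algebras (𝔛_Roc(M), [·,·]) ⊆ (𝔛_{G₂}(M), [·,·]) ⊆ (𝔛(M), [·,·]). -/

import Mathlib

/-!
Since Mathlib does not yet provide differential forms, exterior derivatives, interior
products or Lie derivatives on smooth manifolds, we axiomatize a smooth manifold together
with its Cartan calculus as a structure `DGCtx`: it records the points of the manifold,
the smooth vector fields (a Lie algebra), the smooth differential `k`-forms, the exterior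
derivative `d`, the interior product `ι`, and the standard identities relating them
(Cartan's magic formula is used to express the Lie derivative).
-/

/-- An abstract smooth manifold together with its Cartan calculus. -/
structure DGCtx : Type 1 where
  /-- the points of the manifold `M` -/
  Pt : Type
  /-- the smooth vector fields on `M`, a Lie algebra over `ℝ` -/
  VF : Type
  /-- the smooth differential `k`-forms on `M`; `Form 0 = C^∞(M)` -/
  Form : ℕ → Type
  [instVFLieRing : LieRing VF]
  [instVFLieAlg : LieAlgebra ℝ VF]
  [instFormAddCommGroup : ∀ k, AddCommGroup (Form k)]
  [instFormModule : ∀ k, Module ℝ (Form k)]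
  /-- evaluation of a smooth function at a point -/
  eval : Form 0 → Pt → ℝ
  eval_injective : Function.Injective eval
  eval_zero : ∀ p : Pt, eval 0 p = 0
  /-- the exterior derivative -/
  d : ∀ {k : ℕ}, Form k → Form (k + 1)
  d_add : ∀ {k : ℕ} (α β : Form k), d (α + β) = d α + d β
  d_smul : ∀ {k : ℕ} (c : ℝ) (α : Form k), d (c • α) = c • d α
  d_d : ∀ {k : ℕ} (α : Form k), d (d α) = 0
  /-- the interior product (contraction) `ι X α = X ⌟ α` -/
  ι : ∀ {k : ℕ}, VF → Form (k + 1) → Form k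
  ι_add : ∀ {k : ℕ} (X : VF) (α β : Form (k + 1)), ι X (α + β) = ι X α + ι X β
  ι_smul : ∀ {k : ℕ} (c : ℝ) (X : VF) (α : Form (k + 1)), ι X (c • α) = c • ι X α
  ι_add_vf : ∀ {k : ℕ} (X Y : VF) (α : Form (k + 1)), ι (X + Y) α = ι X α + ι Y α
  ι_smul_vf : ∀ {k : ℕ} (c : ℝ) (X : VF) (α : Form (k + 1)), ι (c • X) α = c • ι X α
  ι_antisymm : ∀ {k : ℕ} (X Y : VF) (α : Form (k + 2)), ι X (ι Y α) = - ι Y (ι X α)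
  /-- vector fields are determined by their derivations on smooth functions -/
  vf_ext : ∀ X Y : VF, (∀ f : Form 0, ι X (d f) = ι Y (d f)) → X = Y
  /-- `ι_{[X,Y]} = L_X ∘ ι_Y - ι_Y ∘ L_X`, the Lie derivative being expressed by
  Cartan's magic formula `L_X = d ∘ ι_X + ι_X ∘ d`. -/
  ι_bracket : ∀ {k : ℕ} (X Y : VF) (α : Form (k + 2)),
    ι ⁅X, Y⁆ α = (d (ι X (ι Y α)) + ι X (d (ι Y α))) - ι Y (d (ι X α) + ι X (d α))
  /-- the same identity one degree lower, where `ι_Y α` is a function and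
  `L_X` acts on functions as `ι_X ∘ d`. -/
  ι_bracket₀ : ∀ (X Y : VF) (α : Form 1),
    ι ⁅X, Y⁆ α = ι X (d (ι Y α)) - ι Y (d (ι X α) + ι X (d α))

attribute [instance] DGCtx.instVFLieRing DGCtx.instVFLieAlg
  DGCtx.instFormAddCommGroup DGCtx.instFormModule

namespace DGCtx

variable (C : DGCtx)

/-- The Lie derivative `L_X` on `(k+1)`-forms, via Cartan's magic formula. -/
def lieD {k : ℕ} (X : C.VF) (α : C.Form (k + 1)) : C.Form (k + 1) :=
  C.d (C.ι X α) + C.ι X (C.d α)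

/-- The Lie derivative `L_X` on smooth functions. -/
def lieF (X : C.VF) (f : C.Form 0) : C.Form 0 := C.ι X (C.d f)

end DGCtx

/-- A symplectic structure on the manifold `C`: a closed nondegenerate 2-form.
(Nondegeneracy is recorded through its consequence that contraction with `ω` is an
injective map from vector fields to 1-forms.) -/
structure SymplData (C : DGCtx) where
  /-- the symplectic form -/
  ω : C.Form 2
  closed : C.d ω = 0
  nondeg : ∀ X Y : C.VF, C.ι X ω = C.ι Y ω → X = Y

namespace SymplData

variable {C : DGCtx} (S : SymplData C)

/-- A vector field is symplectic if its flow preserves `ω`, i.e. `L_X ω = 0`. -/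
def IsSympVF (X : C.VF) : Prop := C.lieD (k := 1) X S.ω = 0

/-- A vector field is Hamiltonian if `X ⌟ ω = d H` for some smooth function `H`. -/
def IsHamVF (X : C.VF) : Prop := ∃ H : C.Form 0, C.ι X S.ω = C.d H

end SymplData

/-- A symplectic structure together with the assignment `f ↦ X_f` of the (unique, by
nondegeneracy) Hamiltonian vector field of each smooth function; these exist on any
symplectic manifold since `ω` induces an isomorphism between vector fields and 1-forms.
`ham_span` records that Hamiltonian vector fields span each tangent space. -/
structure HamSympl (C : DGCtx) extends SymplData C where
  /-- the Hamiltonian vector field `X_f` of a smooth function `f` -/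
  ham : C.Form 0 → C.VF
  ham_spec : ∀ f : C.Form 0, C.ι (ham f) ω = C.d f
  ham_span : ∀ β : C.Form 2, (∀ f : C.Form 0, C.ι (ham f) β = 0) → β = 0

namespace HamSympl

variable {C : DGCtx} (S : HamSympl C)

/-- The Poisson bracket `{f, g} = ω(X_f, X_g)`. -/
def pb (f g : C.Form 0) : C.Form 0 := C.ι (S.ham g) (C.ι (S.ham f) S.ω)

end HamSympl

/-- A `G₂`-structure on the 7-manifold `C`: the fundamental (nondegenerate) 3-form `φ`.
(Nondegeneracy is recorded through its consequence that contraction with `φ` is an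
injective map from vector fields to 2-forms.) -/
structure G2Data (C : DGCtx) where
  /-- the fundamental 3-form of the `G₂`-structure -/
  φ : C.Form 3
  nondeg : ∀ X Y : C.VF, C.ι X φ = C.ι Y φ → X = Y

namespace G2Data

variable {C : DGCtx} (G : G2Data C)

/-- `Ω²₇(M) = {X ⌟ φ : X a vector field}`, the 7-dimensional component of the 2-forms. -/
def Omega27 : Set (C.Form 2) := Set.range fun X : C.VF => C.ι X G.φ

/-- A `G₂`-vector field: one whose flow preserves `φ`, i.e. `L_X φ = 0`. -/
def IsG2VF (X : C.VF) : Prop := C.lieD (k := 2) X G.φ = 0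

/-- A Rochesterian vector field: `X ⌟ φ = d α` for some 1-form `α` (such an `α` is
automatically a Rochesterian 1-form since `d α = X ⌟ φ ∈ Ω²₇`). -/
def IsRocVF (X : C.VF) : Prop := ∃ α : C.Form 1, C.ι X G.φ = C.d α

/-- A Rochesterian 1-form: a 1-form `α` with `d α ∈ Ω²₇(M)`. -/
def IsRoc1 (α : C.Form 1) : Prop := C.d α ∈ G.Omega27

/-- The Rochesterian vector field `X_α` of a Rochesterian 1-form `α`: the unique (by
nondegeneracy) vector field with `X_α ⌟ φ = d α`; junk value `0` otherwise. -/
noncomputable def rvf (α : C.Form 1) : C.VF :=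
  letI := Classical.propDecidable (∃ X : C.VF, C.ι X G.φ = C.d α)
  if h : ∃ X : C.VF, C.ι X G.φ = C.d α then h.choose else 0

/-- The bracket `{α, β} = φ(X_α, X_β, ·)` on Rochesterian 1-forms. -/
noncomputable def rbr (α β : C.Form 1) : C.Form 1 :=
  C.ι (G.rvf β) (C.ι (G.rvf α) G.φ)

end G2Data

/-- The pullback data of a smooth map `ψ : C → D`: pullback of forms, commuting
with `d` and `ℝ`-linear. -/
structure SmoothPull (C D : DGCtx) where
  /-- pullback of forms, `ψ^*` -/
  pull : ∀ {k : ℕ}, D.Form k → C.Form k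
  pull_add : ∀ {k : ℕ} (α β : D.Form k), pull (α + β) = pull α + pull β
  pull_smul : ∀ {k : ℕ} (c : ℝ) (α : D.Form k), pull (c • α) = c • pull α
  pull_d : ∀ {k : ℕ} (α : D.Form k), pull (D.d α) = C.d (pull α)

/-- The pullback data of a diffeomorphism `ψ : C → D`: in addition to the pullback of
forms, vector fields pull back by `X ↦ dψ⁻¹ ∘ X ∘ ψ`, pullbacks are bijective, and the
pullback is compatible with the interior product: `ψ^*(X ⌟ α) = (ψ^* X) ⌟ (ψ^* α)`. -/
structure DiffeoPull (C D : DGCtx) extends SmoothPull C D where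
  /-- pullback of vector fields under the diffeomorphism, `X ↦ dψ⁻¹ ∘ X ∘ ψ` -/
  pullVF : D.VF → C.VF
  pullVF_bijective : Function.Bijective pullVF
  pull_bijective : ∀ k : ℕ, Function.Bijective fun α : D.Form k => pull α
  pull_ι : ∀ {k : ℕ} (X : D.VF) (α : D.Form (k + 1)),
    pull (D.ι X α) = C.ι (pullVF X) (pull α)

/-- A closed (compact, boundaryless) 7-manifold with `G₂`-structure `φ`: in addition to
the `G₂` 3-form we record the wedge product (in the degrees needed), the induced metric
`⟨·,·⟩_φ` and volume form via `(X ⌟ φ) ∧ (Y ⌟ φ) ∧ φ = 6 ⟨X,Y⟩_φ dvol_φ`, and integration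
of 7-forms, for which Stokes' theorem `∫_M dη = ∫_{∂M} η = 0` holds since `∂M = ∅`. -/
structure ClosedManifoldG2 (C : DGCtx) extends G2Data C where
  /-- the wedge product of forms -/
  wedge : ∀ {k l : ℕ}, C.Form k → C.Form l → C.Form (k + l)
  wedge_zero_left : ∀ {k l : ℕ} (β : C.Form l), wedge (0 : C.Form k) β = 0
  wedge_zero_right : ∀ {k l : ℕ} (α : C.Form k), wedge α (0 : C.Form l) = 0
  wedge_assoc₂₂₃ : ∀ (α β : C.Form 2) (γ : C.Form 3),
    wedge (wedge α β) γ = wedge α (wedge β γ)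
  d_wedge₁₅ : ∀ (α : C.Form 1) (β : C.Form 5),
    C.d (wedge α β) = wedge (C.d α) β - wedge α (C.d β)
  d_wedge₂₃ : ∀ (α : C.Form 2) (β : C.Form 3),
    C.d (wedge α β) = wedge (C.d α) β + wedge α (C.d β)
  /-- the `G₂`-metric `⟨X, Y⟩_φ`, as a smooth function -/
  inner : C.VF → C.VF → C.Form 0
  /-- the volume form `dvol_φ` of the `G₂`-metric -/
  vol : C.Form 7
  /-- multiplication of a 7-form by a smooth function -/
  fmul : C.Form 0 → C.Form 7 → C.Form 7
  fmul_smul : ∀ (c : ℝ) (f : C.Form 0) (η : C.Form 7), fmul (c • f) η = c • fmul f η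
  /-- the defining identity of the `G₂`-metric:
  `(X ⌟ φ) ∧ (Y ⌟ φ) ∧ φ = 6 ⟨X,Y⟩_φ dvol_φ` -/
  g2_metric : ∀ X Y : C.VF,
    wedge (wedge (C.ι X φ) (C.ι Y φ)) φ = fmul ((6 : ℝ) • inner X Y) vol
  /-- integration of 7-forms over `M` -/
  integral : C.Form 7 → ℝ
  integral_smul : ∀ (c : ℝ) (η : C.Form 7), integral (c • η) = c * integral η
  /-- Stokes' theorem on the closed manifold `M`: `∫_M dη = 0` -/
  stokes : ∀ η : C.Form 6, integral (C.d η) = 0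
  /-- `∫_M ⟨X,X⟩_φ dvol_φ ≥ 0` (it is `6⁻¹` of the square of the `L²`-norm of `X`) -/
  inner_self_integral_nonneg : ∀ X : C.VF, 0 ≤ integral (fmul (inner X X) vol)
  /-- `∫_M ⟨X,X⟩_φ dvol_φ = 0` forces `X = 0`, by positive-definiteness of the metric -/
  inner_self_integral_eq_zero : ∀ X : C.VF, integral (fmul (inner X X) vol) = 0 → X = 0

/-!
For a closed form `φ`, Cartan's formula reduces `L_X φ` to `d (X ⌟ φ)`, and
`ι_[X,Y] = [L_X, ι_Y]` gives `[X,Y] ⌟ φ = d (X ⌟ Y ⌟ φ)` as soon as `L_X φ = L_Y φ = 0`.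
So the bracket of two `G₂`-vector fields is Rochesterian, and Rochesterian fields are
`G₂`-vector fields since `L_X φ = d d α = 0`.
-/

namespace DGCtx

variable {C : DGCtx} {k : ℕ} {φ : C.Form (k + 2)}

lemma ι_zero (X : C.VF) : C.ι X (0 : C.Form (k + 1)) = 0 := by
  simpa using C.ι_smul 0 X 0

lemma lieD_eq_d_ι_of_d_eq_zero (hφ : C.d φ = 0) (X : C.VF) :
    C.lieD X φ = C.d (C.ι X φ) := by
  rw [lieD, hφ, ι_zero, add_zero]

lemma lieD_eq_zero_of_ι_eq_d (hφ : C.d φ = 0) {X : C.VF} {α : C.Form k}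
    (hX : C.ι X φ = C.d α) : C.lieD X φ = 0 := by
  rw [lieD_eq_d_ι_of_d_eq_zero hφ, hX, C.d_d]

lemma ι_bracket_eq_d_ι_ι (hφ : C.d φ = 0) {X Y : C.VF}
    (hX : C.lieD X φ = 0) (hY : C.lieD Y φ = 0) :
    C.ι ⁅X, Y⁆ φ = C.d (C.ι X (C.ι Y φ)) := by
  rw [lieD_eq_d_ι_of_d_eq_zero hφ] at hX hY
  rw [C.ι_bracket, hφ, hX, hY, ι_zero, add_zero, ι_zero, add_zero, ι_zero, sub_zero]

lemma lieD_bracket_eq_zero (hφ : C.d φ = 0) {X Y : C.VF}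
    (hX : C.lieD X φ = 0) (hY : C.lieD Y φ = 0) : C.lieD ⁅X, Y⁆ φ = 0 :=
  lieD_eq_zero_of_ι_eq_d hφ (ι_bracket_eq_d_ι_ι hφ hX hY)

end DGCtx

/-- Let `(M, φ)` be a 7-manifold with closed `G₂`-structure.  The
Rochesterian vector fields and the `G₂`-vector fields are closed under the Lie bracket of
vector fields, and every Rochesterian vector field is a `G₂`-vector field; hence there are
inclusions of Lie algebras `𝔛_Roc(M) ⊆ 𝔛_{G₂}(M) ⊆ 𝔛(M)`. -/
theorem rochesterian_g2_lie_subalgebras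
    (C : DGCtx) (G : G2Data C) (hφ : C.d G.φ = 0) :
    (∀ X Y : C.VF, G.IsRocVF X → G.IsRocVF Y → G.IsRocVF ⁅X, Y⁆) ∧
    (∀ X Y : C.VF, G.IsG2VF X → G.IsG2VF Y → G.IsG2VF ⁅X, Y⁆) ∧
    (∀ X : C.VF, G.IsRocVF X → G.IsG2VF X) := by
  have roc_g2 : ∀ X : C.VF, G.IsRocVF X → G.IsG2VF X :=
    fun _ ⟨_, hX⟩ => DGCtx.lieD_eq_zero_of_ι_eq_d hφ hX
  refine ⟨fun X Y hX hY => ?_, fun _ _ hX hY => DGCtx.lieD_bracket_eq_zero hφ hX hY, roc_g2⟩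
  exact ⟨_, DGCtx.ι_bracket_eq_d_ι_ι hφ (roc_g2 X hX) (roc_g2 Y hY)⟩
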